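/- Let D ⊆ ℝ^n be a measurable set with Lebesgue measure, let (φ_l)_{l≥1} be an orthonormal sequence in L²(D), and let (λ_l)_{l≥1} be a nonincreasing sequence of nonnegative reals with Σ_l λ_l² < ∞. Suppose k ∈ L²(D × D) satisfies k = Σ_{l=1}^∞ λ_l φ_l ⊗ φ_l, with convergence of the series in L²(D × D) (where (φ_l ⊗ φ_l)(y,x) = φ_l(y)φ_l(x)). Then for every integer r > 0 and every choice of functions f_1, …, f_r ∈ L²(D): ∫_D ∫_D ( k(y,x) − Σ_{l=1}^r f_l(y) f_l(x) )² dy dx ≥ Σ_{l=r+1}^∞ λ_l², and equality holds for the choice f_l = √λ_l φ_l, l = 1, …, r. -/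

import Mathlib

/-!
Everything happens in an abstract Hilbert space `E` carrying a map `t : H → H → E` with
`⟪t a b, t c d⟫ = ⟪a, c⟫ * ⟪b, d⟫`; on `L²(D)` this is `(F, G) ↦ F(y) G(x)` in `L²(D × D)`.

For the lower bound, let `P` be the orthogonal projection onto the span `V` of the `f i`
(so `dim V ≤ r`) and `ξ l = φ l - P (φ l)`. The vectors `t (ξ l) (φ l)` are pairwise orthogonal,
orthogonal to every `t (f i) (f i)`, and pair with `k` to `λ l * ‖ξ l‖²`, so Bessel's inequality
gives `‖k - ∑ t (f i) (f i)‖² ≥ ∑ λ l² (1 - d l)` with `d l = ‖P (φ l)‖² ∈ [0, 1]` and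
`∑ d l ≤ dim V ≤ r`. Since `λ` is nonincreasing, such weights of total mass at most `r` remove at
most the `r` largest terms, leaving `∑_{l ≥ r} λ l²`. Equality for `f l = √(λ l) φ l` is Pythagoras
for the orthonormal family `t (φ l) (φ l)`.
-/

open MeasureTheory Filter Topology Finset
open scoped RealInnerProductSpace

theorem sum_range_add_le_sum_mul_one_sub {a d : ℕ → ℝ} (ha : Antitone a) {r n : ℕ}
    (har : 0 ≤ a r) (hd0 : ∀ l, 0 ≤ d l) (hd1 : ∀ l, d l ≤ 1)
    (hdr : ∑ l ∈ range (r + n), d l ≤ r) :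
    ∑ j ∈ range n, a (r + j) ≤ ∑ l ∈ range (r + n), a l * (1 - d l) := by
  rw [sum_range_add] at hdr ⊢
  have head : ∑ l ∈ range r, a r * (1 - d l) ≤ ∑ l ∈ range r, a l * (1 - d l) :=
    sum_le_sum fun l hl =>
      mul_le_mul_of_nonneg_right (ha (mem_range.1 hl).le) (sub_nonneg.2 (hd1 l))
  have tail : ∑ j ∈ range n, a (r + j) * d (r + j) ≤ ∑ j ∈ range n, a r * d (r + j) :=
    sum_le_sum fun j _ => mul_le_mul_of_nonneg_right (ha (Nat.le_add_right r j)) (hd0 _)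
  have budget : 0 ≤ a r * (r - (∑ l ∈ range r, d l + ∑ j ∈ range n, d (r + j))) :=
    mul_nonneg har (sub_nonneg.2 hdr)
  simp only [mul_one_sub, sum_sub_distrib, ← mul_sum, sum_const, card_range, nsmul_eq_mul]
    at head tail ⊢
  nlinarith

theorem tendsto_of_norm_sub_sq_tendsto_zero {F ι : Type*} [SeminormedAddCommGroup F] {l : Filter ι}
    {S : ι → F} {K : F}     (h : Tendsto (fun i => ‖K - S i‖ ^ 2) l (𝓝 0)) : Tendsto S l (𝓝 K) := by
  rw [tendsto_iff_norm_sub_tendsto_zero]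
  simpa [norm_sub_rev, Real.sqrt_sq (norm_nonneg _)] using h.sqrt

variable {E : Type*} [NormedAddCommGroup E] [InnerProductSpace ℝ E]

theorem inner_eq_of_tendsto_sum_range {u : ℕ → E} {K : E}
    (hK : Tendsto (fun m => ∑ l ∈ range m, u l) atTop (𝓝 K)) {x : E} {l : ℕ}
    (hx : ∀ m ≠ l, ⟪x, u m⟫ = 0) : ⟪x, K⟫ = ⟪x, u l⟫ := by
  refine tendsto_nhds_unique (tendsto_const_nhds.inner hK) (tendsto_const_nhds.congr' ?_)
  filter_upwards [eventually_gt_atTop l] with m hm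
  rw [inner_sum, sum_eq_single_of_mem l (mem_range.2 hm) fun j _ hj => hx j hj]

theorem sum_sq_mul_norm_sq_le_norm_sq {ι : Type*} {w : ι → E}
    (hw : Pairwise fun i j => ⟪w i, w j⟫ = 0) {c : ι → ℝ} {T : E}
    (hT : ∀ i, ⟪w i, T⟫ = c i * ‖w i‖ ^ 2) (s : Finset ι) :
    ∑ i ∈ s, c i ^ 2 * ‖w i‖ ^ 2 ≤ ‖T‖ ^ 2 := by
  set S := ∑ i ∈ s, c i • w i
  have inner_S : ∀ X : E, (∀ i ∈ s, ⟪w i, X⟫ = c i * ‖w i‖ ^ 2) →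
      ⟪S, X⟫ = ∑ i ∈ s, c i ^ 2 * ‖w i‖ ^ 2 := fun X hX => by
    simp only [S, sum_inner, real_inner_smul_left]
    exact sum_congr rfl fun i hi => by rw [hX i hi]; ring
  have hSS : ‖S‖ ^ 2 = ∑ i ∈ s, c i ^ 2 * ‖w i‖ ^ 2 := by
    rw [← real_inner_self_eq_norm_sq]
    refine inner_S S fun i hi => ?_
    simp only [S, inner_sum, real_inner_smul_right]
    rw [sum_eq_single_of_mem i hi fun j _ hj => by rw [hw hj.symm, mul_zero],
      real_inner_self_eq_norm_sq]
  have hST : ‖S‖ ^ 2 ≤ ‖S‖ * ‖T‖ := by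
    rw [hSS, ← inner_S T fun i _ => hT i]
    exact real_inner_le_norm S T
  rw [← hSS]
  nlinarith [norm_nonneg S, norm_nonneg T, sq_nonneg (‖T‖ - ‖S‖)]

theorem Orthonormal.hasSum_sq_tail {U : ℕ → E} (hU : Orthonormal ℝ U) {c : ℕ → ℝ} {K : E}
    (hK : Tendsto (fun m => ∑ l ∈ range m, c l • U l) atTop (𝓝 K)) (r : ℕ) :
    HasSum (fun j => c (r + j) ^ 2) (‖K - ∑ l ∈ range r, c l • U l‖ ^ 2) := by
  rw [hasSum_iff_tendsto_nat_of_nonneg fun j => sq_nonneg _]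
  have hpart : ∀ n, ∑ j ∈ range n, c (r + j) ^ 2 =
      ‖∑ l ∈ range (n + r), c l • U l - ∑ l ∈ range r, c l • U l‖ ^ 2 := fun n => by
    have hU' := hU.comp (r + ·) (add_right_injective r)
    rw [add_comm n r, sum_range_add, add_sub_cancel_left, ← real_inner_self_eq_norm_sq]
    simpa [sq] using (hU'.inner_sum (fun j => c (r + j)) (fun j => c (r + j)) (range n)).symm
  simp only [hpart]
  exact (((hK.comp (tendsto_add_atTop_nat r)).sub_const _).norm).pow 2

section

variable {𝕜 F ι : Type*} [RCLike 𝕜] [NormedAddCommGroup F] [InnerProductSpace 𝕜 F]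

theorem Orthonormal.sum_norm_sq_starProjection_le_finrank {φ : ι → F} (hφ : Orthonormal 𝕜 φ)
    (V : Submodule 𝕜 F) [FiniteDimensional 𝕜 V] (s : Finset ι) :
    ∑ l ∈ s, ‖V.starProjection (φ l)‖ ^ 2 ≤ Module.finrank 𝕜 V := by
  set b := stdOrthonormalBasis 𝕜 V
  have parseval (x : F) : ‖V.starProjection x‖ ^ 2 = ∑ a, ‖inner 𝕜 (b a : F) x‖ ^ 2 := by
    rw [V.starProjection_apply, Submodule.norm_coe, ← b.sum_sq_norm_inner_right]
    simp only [V.inner_orthogonalProjectionOnto_eq_of_mem_left]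
  have bessel (a) : ∑ l ∈ s, ‖inner 𝕜 (b a : F) (φ l)‖ ^ 2 ≤ 1 := by
    simpa only [← norm_inner_symm (b a : F), Submodule.norm_coe, b.orthonormal.1 a, one_pow]
      using hφ.sum_inner_products_le (b a : F) (s := s)
  simp only [parseval]
  rw [sum_comm]
  simpa using sum_le_sum fun a (_ : a ∈ univ) => bessel a

end

variable {H : Type*} [NormedAddCommGroup H] [InnerProductSpace ℝ H]

def IsTensorEmbedding (t : H → H → E) : Prop :=
  ∀ a b c d, ⟪t a b, t c d⟫ = ⟪a, c⟫ * ⟪b, d⟫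

namespace IsTensorEmbedding

variable {t : H → H → E}

theorem norm_sq (ht : IsTensorEmbedding t) (a b : H) : ‖t a b‖ ^ 2 = ‖a‖ ^ 2 * ‖b‖ ^ 2 := by
  simp only [← real_inner_self_eq_norm_sq, ht a b a b]

theorem orthonormal_diag (ht : IsTensorEmbedding t) {φ : ℕ → H} (hφ : Orthonormal ℝ φ) :
    Orthonormal ℝ fun l => t (φ l) (φ l) := by
  rw [orthonormal_iff_ite] at hφ ⊢
  intro l l'
  rw [ht, hφ]
  split_ifs <;> simp

theorem tsum_sq_tail_le_norm_sq_sub_sum (ht : IsTensorEmbedding t) {φ : ℕ → H}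
    (hφ : Orthonormal ℝ φ) {lam : ℕ → ℝ} (hpos : ∀ l, 0 ≤ lam l) (hmono : Antitone lam) {K : E}
    (hK : Tendsto (fun m => ∑ l ∈ range m, lam l • t (φ l) (φ l)) atTop (𝓝 K))
    {ι : Type*} [Fintype ι] (f : ι → H) {r : ℕ} (hcard : Fintype.card ι ≤ r) :
    ∑' j, lam (r + j) ^ 2 ≤ ‖K - ∑ i, t (f i) (f i)‖ ^ 2 := by
  set V := Submodule.span ℝ (Set.range f)
  have : FiniteDimensional ℝ V := FiniteDimensional.span_of_finite ℝ (Set.finite_range f)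
  set ξ := fun l => φ l - V.starProjection (φ l)
  have hξf : ∀ l i, ⟪ξ l, f i⟫ = 0 := fun l i =>
    V.starProjection_inner_eq_zero _ _ (Submodule.subset_span ⟨i, rfl⟩)
  have hξφ : ∀ l, ⟪ξ l, φ l⟫ = ‖ξ l‖ ^ 2 := fun l => by
    conv_lhs => rw [← sub_add_cancel (φ l) (V.starProjection (φ l))]
    rw [inner_add_right, V.starProjection_inner_eq_zero _ _ (V.starProjection_apply_mem _),
      add_zero, real_inner_self_eq_norm_sq]
  have hξnorm : ∀ l, ‖ξ l‖ ^ 2 = 1 - ‖V.starProjection (φ l)‖ ^ 2 := fun l => by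
    have := V.norm_sq_eq_add_norm_sq_starProjection (φ l)
    rw [V.starProjection_orthogonal_val, hφ.1 l] at this
    linarith
  set w := fun l => t (ξ l) (φ l)
  have hw : ∀ l, ‖w l‖ ^ 2 = ‖ξ l‖ ^ 2 := fun l => by simp [w, ht.norm_sq, hφ.1 l]
  have hw_orth : Pairwise fun l l' => ⟪w l, w l'⟫ = 0 := fun l l' hl => by
    simp only [w, ht _ _ _ _, hφ.2 hl, mul_zero]
  have hwT : ∀ l, ⟪w l, K - ∑ i, t (f i) (f i)⟫ = lam l * ‖w l‖ ^ 2 := fun l => by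
    have hK_coeff : ⟪w l, K⟫ = ⟪w l, lam l • t (φ l) (φ l)⟫ :=
      inner_eq_of_tendsto_sum_range hK fun m hm => by
        rw [real_inner_smul_right, ht, hφ.2 hm.symm, mul_zero, mul_zero]
    simp only [inner_sub_right, inner_sum, hK_coeff, real_inner_smul_right, w, ht _ _ _ _, hξf,
      zero_mul, sum_const_zero, sub_zero, hξφ, hw]
    rw [real_inner_self_eq_norm_sq, hφ.1 l]
    ring
  have hd1 : ∀ l, ‖V.starProjection (φ l)‖ ^ 2 ≤ 1 := fun l => by
    simpa [hφ.1 l] using pow_le_pow_left₀ (norm_nonneg _) (V.norm_starProjection_apply_le (φ l)) 2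
  have hdr : ∀ s, ∑ l ∈ s, ‖V.starProjection (φ l)‖ ^ 2 ≤ r := fun s =>
    (hφ.sum_norm_sq_starProjection_le_finrank V s).trans
      (by exact_mod_cast (finrank_range_le_card f).trans hcard)
  refine Real.tsum_le_of_sum_range_le (fun _ => sq_nonneg _) fun n => ?_
  calc ∑ j ∈ range n, lam (r + j) ^ 2
      ≤ ∑ l ∈ range (r + n), lam l ^ 2 * (1 - ‖V.starProjection (φ l)‖ ^ 2) :=
        sum_range_add_le_sum_mul_one_sub (fun _ _ h => pow_le_pow_left₀ (hpos _) (hmono h) 2)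
          (sq_nonneg _) (fun _ => sq_nonneg _) hd1 (hdr _)
    _ = ∑ l ∈ range (r + n), lam l ^ 2 * ‖w l‖ ^ 2 := by simp only [hw, hξnorm]
    _ ≤ ‖K - ∑ i, t (f i) (f i)‖ ^ 2 := sum_sq_mul_norm_sq_le_norm_sq hw_orth hwT _

end IsTensorEmbedding

namespace MeasureTheory

variable {α β : Type*} [MeasurableSpace α] [MeasurableSpace β] {μ : Measure α} {ν : Measure β}

theorem MemLp.mul_prod [SFinite μ] [SFinite ν] {F : α → ℝ} {G : β → ℝ}
    (hF : MemLp F 2 μ) (hG : MemLp G 2 ν) :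
    MemLp (fun p : α × β => F p.1 * G p.2) 2 (μ.prod ν) := by
  have hmeas : AEStronglyMeasurable (fun p : α × β => F p.1 * G p.2) (μ.prod ν) :=
    hF.aestronglyMeasurable.comp_fst.mul hG.aestronglyMeasurable.comp_snd
  rw [memLp_two_iff_integrable_sq hmeas]
  simpa only [mul_pow] using hF.integrable_sq.mul_prod hG.integrable_sq

namespace L2

theorem integral_sq_eq_norm_sq (X : Lp ℝ 2 μ) {h : α → ℝ} (hX : ⇑X =ᵐ[μ] h) :
    ∫ a, h a ^ 2 ∂μ = ‖X‖ ^ 2 := by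
  rw [← real_inner_self_eq_norm_sq, inner_def]
  refine integral_congr_ae ?_
  filter_upwards [hX] with a ha
  simp [ha, sq]

theorem orthonormal_toLp {ι : Type*} [DecidableEq ι] {φ : ι → α → ℝ} (hφ : ∀ l, MemLp (φ l) 2 μ)
    (hortho : ∀ l l', ∫ x, φ l x * φ l' x ∂μ = if l = l' then 1 else 0) :
    Orthonormal ℝ fun l => (hφ l).toLp (φ l) := by
  refine orthonormal_iff_ite.2 fun l l' => ?_
  rw [← hortho, inner_def]
  refine integral_congr_ae ?_
  filter_upwards [(hφ l).coeFn_toLp, (hφ l').coeFn_toLp] with x hl hl'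
  simp [hl, hl', mul_comm]

variable [SFinite μ] [SFinite ν]

noncomputable def tprod (F : Lp ℝ 2 μ) (G : Lp ℝ 2 ν) : Lp ℝ 2 (μ.prod ν) :=
  ((Lp.memLp F).mul_prod (Lp.memLp G)).toLp _

theorem coeFn_tprod (F : Lp ℝ 2 μ) (G : Lp ℝ 2 ν) :
    ⇑(tprod F G) =ᵐ[μ.prod ν] fun p => F p.1 * G p.2 :=
  MemLp.coeFn_toLp _

theorem isTensorEmbedding_tprod :
    IsTensorEmbedding (tprod : Lp ℝ 2 μ → Lp ℝ 2 μ → Lp ℝ 2 (μ.prod μ)) := fun a b c d => by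
  simp only [inner_def, RCLike.inner_apply, conj_trivial]
  rw [← integral_prod_mul]
  refine integral_congr_ae ?_
  filter_upwards [coeFn_tprod a b, coeFn_tprod c d] with p hab hcd
  rw [hab, hcd]
  ring

theorem integral_sq_sub_sum_tprod {ι : Type*} (s : Finset ι) {k : α × β → ℝ}
    {K : Lp ℝ 2 (μ.prod ν)} (hK : ⇑K =ᵐ[μ.prod ν] k) (c : ι → ℝ) {g : ι → α → ℝ}
    {h : ι → β → ℝ} {G : ι → Lp ℝ 2 μ} {H : ι → Lp ℝ 2 ν} (hG : ∀ i, ⇑(G i) =ᵐ[μ] g i)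
    (hH : ∀ i, ⇑(H i) =ᵐ[ν] h i) :
    ∫ p, (k p - ∑ i ∈ s, c i * g i p.1 * h i p.2) ^ 2 ∂(μ.prod ν) =
      ‖K - ∑ i ∈ s, c i • tprod (G i) (H i)‖ ^ 2 := by
  have hterm : ∀ i, ⇑(c i • tprod (G i) (H i)) =ᵐ[μ.prod ν] fun p => c i * g i p.1 * h i p.2 :=
    fun i => by
      filter_upwards [Lp.coeFn_smul (c i) (tprod (G i) (H i)), coeFn_tprod (G i) (H i),
        Measure.quasiMeasurePreserving_fst.ae_eq_comp (hG i),
        Measure.quasiMeasurePreserving_snd.ae_eq_comp (hH i)] with p hc hp hg hh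
      rw [hc, Pi.smul_apply, hp, smul_eq_mul, mul_assoc]
      exact congrArg _ (congrArg₂ _ hg hh)
  refine integral_sq_eq_norm_sq _ ?_
  filter_upwards [Lp.coeFn_sub K (∑ i ∈ s, c i • tprod (G i) (H i)), hK,
    Lp.coeFn_fun_finsetSum s fun i => c i • tprod (G i) (H i),
    (eventually_all_finset s).2 fun i _ => hterm i] with p hsub hk hsum hterms
  rw [hsub, Pi.sub_apply, hk, hsum]
  exact congrArg _ (sum_congr rfl hterms)

end L2

end MeasureTheory

theorem stmt_9_general (n : ℕ) (D : Set (EuclideanSpace ℝ (Fin n)))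
    (φ : ℕ → EuclideanSpace ℝ (Fin n) → ℝ)
    (hφmem : ∀ l, MemLp (φ l) 2 (volume.restrict D))
    (hortho : ∀ l l', ∫ x, φ l x * φ l' x ∂(volume.restrict D) =
      if l = l' then 1 else 0)
    (lam : ℕ → ℝ) (hpos : ∀ l, 0 ≤ lam l) (hmono : ∀ ⦃l l'⦄, l ≤ l' → lam l' ≤ lam l)
    (k : EuclideanSpace ℝ (Fin n) → EuclideanSpace ℝ (Fin n) → ℝ)
    (hkmem : MemLp (fun p : EuclideanSpace ℝ (Fin n) × EuclideanSpace ℝ (Fin n) =>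
      k p.1 p.2) 2 ((volume.restrict D).prod (volume.restrict D)))
    (hconv : Filter.Tendsto
      (fun m => ∫ p, (k p.1 p.2 - ∑ l ∈ Finset.range m, lam l * φ l p.1 * φ l p.2) ^ 2
        ∂((volume.restrict D).prod (volume.restrict D)))
      Filter.atTop (nhds 0))
    (r : ℕ) :
    (∀ f : Fin r → EuclideanSpace ℝ (Fin n) → ℝ,
      (∀ l, MemLp (f l) 2 (volume.restrict D)) →
      (∑' l : ℕ, (lam (r + l)) ^ 2) ≤
        ∫ p, (k p.1 p.2 - ∑ l, f l p.1 * f l p.2) ^ 2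
          ∂((volume.restrict D).prod (volume.restrict D))) ∧
    (∫ p, (k p.1 p.2 -
        ∑ l : Fin r, (Real.sqrt (lam l) * φ l p.1) * (Real.sqrt (lam l) * φ l p.2)) ^ 2
        ∂((volume.restrict D).prod (volume.restrict D))) =
      ∑' l : ℕ, (lam (r + l)) ^ 2 := by
  set Φ := fun l => (hφmem l).toLp (φ l)
  have hΦ : Orthonormal ℝ Φ := L2.orthonormal_toLp hφmem hortho
  have hdist_φ : ∀ s : Finset ℕ, _ := fun s => L2.integral_sq_sub_sum_tprod s hkmem.coeFn_toLp lam
    (fun l => (hφmem l).coeFn_toLp) fun l => (hφmem l).coeFn_toLp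
  have hK : Tendsto (fun m => ∑ l ∈ range m, lam l • L2.tprod (Φ l) (Φ l)) atTop
      (𝓝 (hkmem.toLp _)) :=
    tendsto_of_norm_sub_sq_tendsto_zero <| hconv.congr fun m => hdist_φ (range m)
  constructor
  · intro f hf
    have hdist_f := L2.integral_sq_sub_sum_tprod univ hkmem.coeFn_toLp (fun _ => 1)
      (fun i => (hf i).coeFn_toLp) fun i => (hf i).coeFn_toLp
    simp only [one_mul, one_smul] at hdist_f
    rw [hdist_f]
    exact L2.isTensorEmbedding_tprod.tsum_sq_tail_le_norm_sq_sub_sum hΦ hpos hmono hK _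
      (Fintype.card_fin r).le
  · have hsqrt : ∀ p : EuclideanSpace ℝ (Fin n) × EuclideanSpace ℝ (Fin n),
        ∑ l : Fin r, (√(lam l) * φ l p.1) * (√(lam l) * φ l p.2) =
          ∑ l ∈ range r, lam l * φ l p.1 * φ l p.2 := fun p => by
      rw [← Fin.sum_univ_eq_sum_range (fun l => lam l * φ l p.1 * φ l p.2)]
      refine sum_congr rfl fun l _ => ?_
      rw [mul_mul_mul_comm, Real.mul_self_sqrt (hpos l), mul_assoc]
    simp only [hsqrt, hdist_φ]
    exact ((L2.isTensorEmbedding_tprod.orthonormal_diag hΦ).hasSum_sq_tail hK r).tsum_eq.symm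

/-- Optimal-truncation result (Hsing & Eubank, Thms 4.4.7 and 4.6.8): if
`k ∈ L²(D×D)` has the expansion `k(y,x) = Σ_l λ_l φ_l(y) φ_l(x)` (convergence in
`L²(D×D)`), with `(φ_l)` orthonormal in `L²(D)` and `(λ_l)` nonincreasing,
nonnegative and square-summable, then for every `r > 0` and every choice of
`f_1, …, f_r ∈ L²(D)` one has
`∫∫ (k(y,x) − Σ_{l≤r} f_l(y) f_l(x))² ≥ Σ_{l>r} λ_l²`,
with equality for `f_l = √λ_l φ_l`.  (Indices are 0-based, so the tail sum
`Σ_{l>r} λ_l²` of the 1-based statement is `Σ'_{l:ℕ} λ_{r+l}²`.) -/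
theorem stmt_9 (n : ℕ) (D : Set (EuclideanSpace ℝ (Fin n))) (hD : MeasurableSet D)
    (φ : ℕ → EuclideanSpace ℝ (Fin n) → ℝ)
    (hφmem : ∀ l, MemLp (φ l) 2 (volume.restrict D))
    (hortho : ∀ l l', ∫ x, φ l x * φ l' x ∂(volume.restrict D) =
      if l = l' then 1 else 0)
    (lam : ℕ → ℝ) (hpos : ∀ l, 0 ≤ lam l) (hmono : ∀ ⦃l l'⦄, l ≤ l' → lam l' ≤ lam l)
    (hsummable : Summable fun l => (lam l) ^ 2)
    (k : EuclideanSpace ℝ (Fin n) → EuclideanSpace ℝ (Fin n) → ℝ)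
    (hkmem : MemLp (fun p : EuclideanSpace ℝ (Fin n) × EuclideanSpace ℝ (Fin n) =>
      k p.1 p.2) 2 ((volume.restrict D).prod (volume.restrict D)))
    (hconv : Filter.Tendsto
      (fun m => ∫ p, (k p.1 p.2 - ∑ l ∈ Finset.range m, lam l * φ l p.1 * φ l p.2) ^ 2
        ∂((volume.restrict D).prod (volume.restrict D)))
      Filter.atTop (nhds 0))
    (r : ℕ) (hr : 0 < r) :
    (∀ f : Fin r → EuclideanSpace ℝ (Fin n) → ℝ,
      (∀ l, MemLp (f l) 2 (volume.restrict D)) →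
      (∑' l : ℕ, (lam (r + l)) ^ 2) ≤
        ∫ p, (k p.1 p.2 - ∑ l, f l p.1 * f l p.2) ^ 2
          ∂((volume.restrict D).prod (volume.restrict D))) ∧
    (∫ p, (k p.1 p.2 -
        ∑ l : Fin r, (Real.sqrt (lam l) * φ l p.1) * (Real.sqrt (lam l) * φ l p.2)) ^ 2
        ∂((volume.restrict D).prod (volume.restrict D))) =
      ∑' l : ℕ, (lam (r + l)) ^ 2 :=
  stmt_9_general n D φ hφmem hortho lam hpos hmono k hkmem hconv r
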